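/- Let n ≥ 2, let Λ, Λ̃ ⊆ ℝⁿ be full-rank lattices, and let φ : ℝⁿ → ℝⁿ be a focal equivalence between Λ and Λ̃ (a homeomorphism with φ(0) = 0 and φ(σ_i(Λ)) = σ_i(Λ̃) for all i ≥ 1). Then φ(B_k(Λ)) = B_k(Λ̃) for every integer k ≥ 1. -/

import Mathlib

open Set

noncomputable section

/-- Euclidean `n`-space, identified with the tangent plane at the basepoint of a flat torus. -/
abbrev Euc (n : ℕ) := EuclideanSpace ℝ (Fin n)

/-- `Λ ⊆ ℝⁿ` is a full-rank lattice: the image of `ℤⁿ` under some `L ∈ GL(n,ℝ)`,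
equivalently the set of integer combinations of a basis of `ℝⁿ`. -/
def IsFullLattice {n : ℕ} (Λ : Set (Euc n)) : Prop :=
  ∃ b : Module.Basis (Fin n) ℝ (Euc n),
    Λ = {v : Euc n | ∃ m : Fin n → ℤ, v = ∑ i, (m i : ℝ) • b i}

/-- The Brillouin hyperplane `V_λ = {v : ‖v‖ = ‖v - λ‖}` (perpendicular bisector of `0` and `λ`). -/
def Bplane {n : ℕ} (lam : Euc n) : Set (Euc n) :=
  {v : Euc n | ‖v‖ = ‖v - lam‖}

/-- `μ(v) = #{λ ∈ Λ \ {0} : ‖v − λ‖ = ‖v‖}`. -/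
def mu {n : ℕ} (Λ : Set (Euc n)) (v : Euc n) : ℕ :=
  Set.ncard {lam : Euc n | lam ∈ Λ ∧ lam ≠ 0 ∧ ‖v - lam‖ = ‖v‖}

/-- The focal component `σ_i(Λ) = {v : μ(v) = i − 1}`. -/
def focalComp {n : ℕ} (Λ : Set (Euc n)) (i : ℕ) : Set (Euc n) :=
  {v : Euc n | mu Λ v = i - 1}

/-- The Brillouin set `B_k(Λ) = {v : #{λ ∈ Λ : ‖v − λ‖ ≤ ‖v‖} = k}` (here `λ = 0` is counted). -/
def brillouin {n : ℕ} (Λ : Set (Euc n)) (k : ℕ) : Set (Euc n) :=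
  {v : Euc n | Set.ncard {lam : Euc n | lam ∈ Λ ∧ ‖v - lam‖ ≤ ‖v‖} = k}

/-- `ι(v) = #{λ ∈ Λ \ {0} : V_λ meets the open segment from 0 to v}`. -/
def iota {n : ℕ} (Λ : Set (Euc n)) (v : Euc n) : ℕ :=
  Set.ncard {lam : Euc n | lam ∈ Λ ∧ lam ≠ 0 ∧
    ∃ t : ℝ, 0 < t ∧ t < 1 ∧ t • v ∈ Bplane lam}

/-!
The number of points of `Λ` in the closed ball around `v` through `0` is `1 + ι(v) + μ(v)`, where
`ι(v)` counts the Brillouin hyperplanes strictly separating `0` from `v`, i.e. those crossed by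
the open segment `(0, v)`. A focal equivalence `φ` preserves `μ` pointwise. Every hyperplane
separating `0` from `φ v` is crossed by the path `t ↦ φ (t • v)`, and counting crossings of that
path time by time gives `∑ₜ μ(φ (t • v)) = ∑ₜ μ(t • v)`, the number of crossings of the segment,
which is `ι(v)`. Hence `ι(φ v) ≤ ι(v)`, and the same argument for `φ⁻¹` gives equality.
-/

open RealInnerProductSpace Cardinal

lemma Set.encard_eq_of_forall_mk_fiber_eq {α β : Type*} {A B : Set (α × β)}
    (h : ∀ a, #{b | (a, b) ∈ A} = #{b | (a, b) ∈ B}) : A.encard = B.encard := by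
  rw [← toENat_cardinalMk, ← toENat_cardinalMk,
    mk_congr (Equiv.subtypeProdEquivSigmaSubtype fun a b => (a, b) ∈ A),
    mk_congr (Equiv.subtypeProdEquivSigmaSubtype fun a b => (a, b) ∈ B), mk_sigma, mk_sigma]
  exact congrArg _ (congrArg _ (funext h))

variable {n : ℕ}

lemma IsFullLattice.zero_mem {Λ : Set (Euc n)} (hΛ : IsFullLattice Λ) : (0 : Euc n) ∈ Λ := by
  obtain ⟨b, rfl⟩ := hΛ
  exact ⟨0, by simp⟩

lemma IsFullLattice.finite_inter_closedBall {Λ : Set (Euc n)} (hΛ : IsFullLattice Λ) (R : ℝ) :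
    (Λ ∩ Metric.closedBall 0 R).Finite := by
  obtain ⟨b, rfl⟩ := hΛ
  have hspan : {v : Euc n | ∃ m : Fin n → ℤ, v = ∑ i, (m i : ℝ) • b i} =
      Submodule.span ℤ (range b) := by
    ext v
    simp only [mem_ofPred_eq, SetLike.mem_coe, Submodule.mem_span_range_iff_exists_fun,
      Int.cast_smul_eq_zsmul, eq_comm]
  rw [hspan, inter_comm]
  exact ZSpan.setFinite_inter b Metric.isBounded_closedBall

lemma norm_sub_sq_eq_add (v lam : Euc n) :
    ‖v - lam‖ ^ 2 = ‖v‖ ^ 2 + (‖lam‖ ^ 2 - 2 * ⟪v, lam⟫) := by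
  rw [norm_sub_sq_real]; ring

lemma norm_sub_lt_iff (v lam : Euc n) : ‖v - lam‖ < ‖v‖ ↔ ‖lam‖ ^ 2 < 2 * ⟪v, lam⟫ := by
  rw [← pow_lt_pow_iff_left₀ (norm_nonneg _) (norm_nonneg _) two_ne_zero, norm_sub_sq_eq_add]
  constructor <;> intro h <;> linarith

lemma mem_Bplane_iff (w lam : Euc n) : w ∈ Bplane lam ↔ 2 * ⟪w, lam⟫ = ‖lam‖ ^ 2 := by
  rw [Bplane, mem_ofPred_eq, ← sq_eq_sq₀ (norm_nonneg _) (norm_nonneg _), norm_sub_sq_eq_add]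
  constructor <;> intro h <;> linarith

lemma smul_mem_Bplane_iff (t : ℝ) (v lam : Euc n) :
    t • v ∈ Bplane lam ↔ t * (2 * ⟪v, lam⟫) = ‖lam‖ ^ 2 := by
  rw [mem_Bplane_iff, real_inner_smul_left]; ring_nf

lemma exists_smul_mem_Bplane_iff {lam : Euc n} (hlam : lam ≠ 0) (v : Euc n) :
    (∃ t : ℝ, 0 < t ∧ t < 1 ∧ t • v ∈ Bplane lam) ↔ ‖v - lam‖ < ‖v‖ := by
  have hlam2 : 0 < ‖lam‖ ^ 2 := by positivity
  simp only [smul_mem_Bplane_iff, norm_sub_lt_iff]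
  constructor
  · rintro ⟨t, ht0, ht1, ht⟩
    nlinarith
  · intro h
    have hinner : 0 < ⟪v, lam⟫ := by linarith
    exact ⟨‖lam‖ ^ 2 / (2 * ⟪v, lam⟫), by positivity, (div_lt_one (by positivity)).2 h,
      by field_simp⟩

lemma finite_setOf_norm_sub_le {Λ : Set (Euc n)} (hΛ : ∀ R, (Λ ∩ Metric.closedBall 0 R).Finite)
    (v : Euc n) : {lam | lam ∈ Λ ∧ ‖v - lam‖ ≤ ‖v‖}.Finite := by
  refine (hΛ (2 * ‖v‖)).subset fun lam ⟨hmem, hle⟩ => ⟨hmem, ?_⟩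
  rw [mem_closedBall_zero_iff]
  calc ‖lam‖ = ‖v - (v - lam)‖ := by rw [sub_sub_cancel]
    _ ≤ ‖v‖ + ‖v - lam‖ := norm_sub_le _ _
    _ ≤ 2 * ‖v‖ := by linarith

lemma finite_setOf_norm_sub_lt {Λ : Set (Euc n)} (hΛ : ∀ R, (Λ ∩ Metric.closedBall 0 R).Finite)
    (v : Euc n) : {lam | lam ∈ Λ ∧ lam ≠ 0 ∧ ‖v - lam‖ < ‖v‖}.Finite :=
  (finite_setOf_norm_sub_le hΛ v).subset fun _ h => ⟨h.1, h.2.2.le⟩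

lemma finite_setOf_norm_sub_eq {Λ : Set (Euc n)} (hΛ : ∀ R, (Λ ∩ Metric.closedBall 0 R).Finite)
    (v : Euc n) : {lam | lam ∈ Λ ∧ lam ≠ 0 ∧ ‖v - lam‖ = ‖v‖}.Finite :=
  (finite_setOf_norm_sub_le hΛ v).subset fun _ h => ⟨h.1, h.2.2.le⟩

lemma setOf_exists_smul_mem_Bplane (Λ : Set (Euc n)) (v : Euc n) :
    {lam | lam ∈ Λ ∧ lam ≠ 0 ∧ ∃ t : ℝ, 0 < t ∧ t < 1 ∧ t • v ∈ Bplane lam} =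
      {lam | lam ∈ Λ ∧ lam ≠ 0 ∧ ‖v - lam‖ < ‖v‖} := by
  ext lam
  simp only [mem_ofPred_eq, and_congr_right_iff]
  exact fun _ hlam => exists_smul_mem_Bplane_iff hlam v

lemma iota_eq_ncard (Λ : Set (Euc n)) (v : Euc n) :
    iota Λ v = {lam | lam ∈ Λ ∧ lam ≠ 0 ∧ ‖v - lam‖ < ‖v‖}.ncard := by
  rw [iota, setOf_exists_smul_mem_Bplane]

lemma ncard_setOf_norm_sub_le {Λ : Set (Euc n)} (h0 : (0 : Euc n) ∈ Λ)
    (hΛ : ∀ R, (Λ ∩ Metric.closedBall 0 R).Finite) (v : Euc n) :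
    {lam | lam ∈ Λ ∧ ‖v - lam‖ ≤ ‖v‖}.ncard = iota Λ v + mu Λ v + 1 := by
  set closer := {lam | lam ∈ Λ ∧ lam ≠ 0 ∧ ‖v - lam‖ < ‖v‖}
  set equidistant := {lam | lam ∈ Λ ∧ lam ≠ 0 ∧ ‖v - lam‖ = ‖v‖}
  have hsplit : {lam | lam ∈ Λ ∧ ‖v - lam‖ ≤ ‖v‖} = insert 0 (closer ∪ equidistant) := by
    ext lam
    by_cases hlam : lam = 0
    · simp [hlam, h0]
    · simp only [closer, equidistant, mem_insert_iff, mem_union, mem_ofPred_eq, hlam,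
        le_iff_lt_or_eq]
      tauto
  have hcloser : closer.Finite := finite_setOf_norm_sub_lt hΛ v
  have hequi : equidistant.Finite := finite_setOf_norm_sub_eq hΛ v
  have hdisj : Disjoint closer equidistant :=
    disjoint_left.2 fun lam hlt heq => hlt.2.2.ne heq.2.2
  rw [hsplit, ncard_insert_of_notMem (fun h => by rcases h with h | h <;> exact h.2.1 rfl)
    (hcloser.union hequi), ncard_union_eq hdisj hcloser hequi, iota_eq_ncard, mu]

def crossings (Λ : Set (Euc n)) (γ : ℝ → Euc n) : Set (ℝ × Euc n) :=
  {p | p.1 ∈ Ioo 0 1 ∧ p.2 ∈ Λ ∧ p.2 ≠ 0 ∧ γ p.1 ∈ Bplane p.2}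

lemma exists_mem_Ioo_mem_Bplane {γ : ℝ → Euc n} (hγ : Continuous γ) (h0 : γ 0 = 0)
    {lam : Euc n} (hlam : lam ≠ 0) (h1 : ‖γ 1 - lam‖ < ‖γ 1‖) :
    ∃ t ∈ Ioo (0 : ℝ) 1, γ t ∈ Bplane lam := by
  have hcont : ContinuousOn (fun t => 2 * ⟪γ t, lam⟫) (Icc 0 1) := by fun_prop
  have hmem : ‖lam‖ ^ 2 ∈ Ioo (2 * ⟪γ 0, lam⟫) (2 * ⟪γ 1, lam⟫) :=
    ⟨by simp [h0, hlam], (norm_sub_lt_iff _ _).1 h1⟩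
  obtain ⟨t, ht, hγt⟩ := intermediate_value_Ioo zero_le_one hcont hmem
  exact ⟨t, ht, (mem_Bplane_iff _ _).2 hγt⟩

lemma encard_le_encard_crossings (Λ : Set (Euc n)) {γ : ℝ → Euc n} (hγ : Continuous γ)
    (h0 : γ 0 = 0) :
    {lam | lam ∈ Λ ∧ lam ≠ 0 ∧ ‖γ 1 - lam‖ < ‖γ 1‖}.encard ≤ (crossings Λ γ).encard := by
  choose! T hT hγT using fun lam (h : lam ∈ {lam | lam ∈ Λ ∧ lam ≠ 0 ∧ ‖γ 1 - lam‖ < ‖γ 1‖}) =>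
    exists_mem_Ioo_mem_Bplane hγ h0 h.2.1 h.2.2
  refine encard_le_encard_of_injOn (f := fun lam => (T lam, lam)) (fun lam h => ?_)
    (fun _ _ _ _ h => congrArg Prod.snd h)
  exact ⟨hT lam h, h.1, h.2.1, hγT lam h⟩

lemma encard_crossings_smul (Λ : Set (Euc n)) (v : Euc n) :
    (crossings Λ (· • v)).encard =
      {lam | lam ∈ Λ ∧ lam ≠ 0 ∧ ∃ t : ℝ, 0 < t ∧ t < 1 ∧ t • v ∈ Bplane lam}.encard := by
  have hinj : InjOn Prod.snd (crossings Λ (· • v)) := by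
    rintro ⟨s, lam⟩ ⟨-, -, hlam, hs⟩ ⟨t, _⟩ ⟨-, -, -, ht⟩ rfl
    have hlam2 : 0 < ‖lam‖ ^ 2 := by positivity
    rw [smul_mem_Bplane_iff] at hs ht
    have hinner : 2 * ⟪v, lam⟫ ≠ 0 := fun h => by rw [h, mul_zero] at hs; linarith
    simp only [Prod.mk.injEq, and_true]
    exact mul_right_cancel₀ hinner (hs.trans ht.symm)
  rw [← hinj.encard_image]
  congr 1
  ext lam
  simp only [crossings, mem_image, mem_ofPred_eq, Prod.exists, exists_eq_right, mem_Ioo]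
  tauto

lemma setOf_mem_crossings (Λ : Set (Euc n)) (γ : ℝ → Euc n) {t : ℝ} (ht : t ∈ Ioo 0 1) :
    {lam | (t, lam) ∈ crossings Λ γ} = {lam | lam ∈ Λ ∧ lam ≠ 0 ∧ ‖γ t - lam‖ = ‖γ t‖} := by
  ext lam
  simp only [crossings, Bplane, mem_ofPred_eq, eq_comm (a := ‖γ t‖), and_iff_right ht]

lemma encard_crossings_congr {Λ Λ' : Set (Euc n)}
    (hΛ : ∀ R, (Λ ∩ Metric.closedBall 0 R).Finite) (hΛ' : ∀ R, (Λ' ∩ Metric.closedBall 0 R).Finite)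
    {γ γ' : ℝ → Euc n} (hμ : ∀ t ∈ Ioo (0 : ℝ) 1, mu Λ' (γ' t) = mu Λ (γ t)) :
    (crossings Λ' γ').encard = (crossings Λ γ).encard := by
  refine encard_eq_of_forall_mk_fiber_eq fun t => ?_
  by_cases ht : t ∈ Ioo (0 : ℝ) 1
  · rw [setOf_mem_crossings _ _ ht, setOf_mem_crossings _ _ ht,
      ← cast_ncard (finite_setOf_norm_sub_eq hΛ' _), ← cast_ncard (finite_setOf_norm_sub_eq hΛ _)]
    exact congrArg _ (hμ t ht)
  · simp only [crossings, mem_ofPred_eq, ht, false_and, ofPred_false]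

lemma iota_apply_le {Λ Λ' : Set (Euc n)}
    (hΛ : ∀ R, (Λ ∩ Metric.closedBall 0 R).Finite) (hΛ' : ∀ R, (Λ' ∩ Metric.closedBall 0 R).Finite)
    {φ : Euc n → Euc n} (hφ : Continuous φ) (hφ0 : φ 0 = 0) (hμ : ∀ v, mu Λ' (φ v) = mu Λ v)
    (v : Euc n) : iota Λ' (φ v) ≤ iota Λ v := by
  suffices (iota Λ' (φ v) : ℕ∞) ≤ iota Λ v by exact_mod_cast this
  calc (iota Λ' (φ v) : ℕ∞) = {lam | lam ∈ Λ' ∧ lam ≠ 0 ∧ ‖φ v - lam‖ < ‖φ v‖}.encard := by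
        rw [iota_eq_ncard, (finite_setOf_norm_sub_lt hΛ' _).cast_ncard_eq]
    _ ≤ (crossings Λ' fun t => φ (t • v)).encard := by
        simpa using encard_le_encard_crossings Λ' (γ := fun t => φ (t • v)) (by fun_prop)
          (by simp [hφ0])
    _ = (crossings Λ (· • v)).encard := encard_crossings_congr hΛ hΛ' fun t _ => hμ _
    _ = iota Λ v := by
        rw [encard_crossings_smul, setOf_exists_smul_mem_Bplane, iota_eq_ncard,
          (finite_setOf_norm_sub_lt hΛ v).cast_ncard_eq]

lemma mu_apply_eq_of_image_focalComp {Λ Λ' : Set (Euc n)} {φ : Euc n → Euc n}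
    (hφ : ∀ i : ℕ, 1 ≤ i → φ '' focalComp Λ i = focalComp Λ' i) (v : Euc n) :
    mu Λ' (φ v) = mu Λ v := by
  have hv : φ v ∈ φ '' focalComp Λ (mu Λ v + 1) := mem_image_of_mem φ (by simp [focalComp])
  rw [hφ _ le_add_self] at hv
  simpa [focalComp] using hv

theorem focal_equiv_maps_brillouin_general {n : ℕ}
    (Λ Λ' : Set (Euc n)) (hΛ : IsFullLattice Λ) (hΛ' : IsFullLattice Λ')
    (φ : Euc n ≃ₜ Euc n) (hφ0 : φ 0 = 0)
    (hφ : ∀ i : ℕ, 1 ≤ i → φ '' focalComp Λ i = focalComp Λ' i)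
    (k : ℕ) :
    φ '' brillouin Λ k = brillouin Λ' k := by
  have hμ : ∀ v, mu Λ' (φ v) = mu Λ v := mu_apply_eq_of_image_focalComp hφ
  have hμ_symm (w : Euc n) : mu Λ (φ.symm w) = mu Λ' w := by
    rw [← hμ, φ.apply_symm_apply]
  have hι (v : Euc n) : iota Λ' (φ v) = iota Λ v := by
    refine le_antisymm (iota_apply_le hΛ.finite_inter_closedBall hΛ'.finite_inter_closedBall
      φ.continuous hφ0 hμ v) ?_
    simpa using iota_apply_le hΛ'.finite_inter_closedBall hΛ.finite_inter_closedBall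
      φ.symm.continuous (φ.symm_apply_eq.2 hφ0.symm) hμ_symm (φ v)
  have hpre : brillouin Λ k = φ ⁻¹' brillouin Λ' k := by
    ext v
    simp only [brillouin, mem_preimage, mem_ofPred_eq,
      ncard_setOf_norm_sub_le hΛ.zero_mem hΛ.finite_inter_closedBall,
      ncard_setOf_norm_sub_le hΛ'.zero_mem hΛ'.finite_inter_closedBall, hι, hμ]
  rw [hpre, φ.image_preimage]

/-- A focal equivalence between full-rank lattices `Λ, Λ'` in `ℝⁿ`, `n ≥ 2`, maps the
`k`-th Brillouin set of `Λ` onto the `k`-th Brillouin set of `Λ'`, for every `k ≥ 1`. -/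
theorem focal_equiv_maps_brillouin {n : ℕ} (hn : 2 ≤ n)
    (Λ Λ' : Set (Euc n)) (hΛ : IsFullLattice Λ) (hΛ' : IsFullLattice Λ')
    (φ : Euc n ≃ₜ Euc n) (hφ0 : φ 0 = 0)
    (hφ : ∀ i : ℕ, 1 ≤ i → φ '' focalComp Λ i = focalComp Λ' i)
    (k : ℕ) (hk : 1 ≤ k) :
    φ '' brillouin Λ k = brillouin Λ' k :=
  focal_equiv_maps_brillouin_general Λ Λ' hΛ hΛ' φ hφ0 hφ k
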